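/- arXiv:1704.03563 — 4 statements merged into one kernel-verified Lean document; each statement's English description precedes it below -/
import Mathlib

section
/- Let $\tau\in[2,+\infty[$ and define $(\eta_n)_{n\in\mathbb{N}}$ by $\eta_0\in[0,1[$ arbitrary and $\eta_{n+1}=n/(n+1+\tau)$ for all $n$. For each $n$ set $\zeta_{k,n}=0$ if $k\le n$ and $\zeta_{k,n}=\sum_{j=n+1}^k(\eta_j-1)$ if $k>n$, and $\chi_n=\sum_{k\ge n}\exp(\zeta_{k,n})$. Then for every $n\in\mathbb{N}$, $\chi_n\le(n+7)/2$. -/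
open Finset

theorem chi_bound_tau
    (τ : ℝ) (hτ : 2 ≤ τ)
    (η : ℕ → ℝ) (hη0 : η 0 ∈ Set.Ico (0 : ℝ) 1)
    (hη : ∀ n : ℕ, η (n + 1) = (n : ℝ) / ((n : ℝ) + 1 + τ))
    (ζ : ℕ → ℕ → ℝ)
    (hζ : ∀ k n : ℕ, ζ k n = if k ≤ n then 0 else ∑ j ∈ Icc (n + 1) k, (η j - 1)) :
    ∀ n : ℕ,
      Summable (fun k : ℕ => Real.exp (ζ (n + k) n)) ∧
      (∑' k : ℕ, Real.exp (ζ (n + k) n)) ≤ ((n : ℝ) + 7) / 2 := by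
  intro n
  set g : ℕ → ℝ := fun k => ((n : ℝ) + 3) ^ 3 / ((n : ℝ) + k + 3) ^ 3 with hgdef
  -- pointwise bound
  have hA : ∀ k : ℕ, Real.exp (ζ (n + k) n) ≤ g k := by
    intro k
    match k with
    | 0 =>
      have : ζ (n + 0) n = 0 := by rw [hζ]; simp
      rw [this, Real.exp_zero, hgdef]
      simp only [Nat.cast_zero, add_zero]
      rw [div_self (by positivity)]
    | (k + 1) =>
      have h1 : ζ (n + (k + 1)) n = ∑ j ∈ Icc (n + 1) (n + (k + 1)), (η j - 1) := by
        rw [hζ, if_neg (by omega)]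
      -- pointwise log estimate
      have hpt : ∀ j ∈ Icc (n + 1) (n + (k + 1)),
          η j - 1 ≤ 3 * Real.log ((j : ℝ) + 2) - 3 * Real.log ((j : ℝ) + 3) := by
        intro j hj
        have hj1 : 1 ≤ j := le_trans (Nat.le_add_left 1 n) (mem_Icc.mp hj).1
        obtain ⟨m, rfl⟩ : ∃ m, j = m + 1 := ⟨j - 1, by omega⟩
        have hm : (0 : ℝ) ≤ (m : ℝ) := Nat.cast_nonneg m
        have hd : (0 : ℝ) < (m : ℝ) + 1 + τ := by linarith
        have e1 : η (m + 1) - 1 = -(1 + τ) / ((m : ℝ) + 1 + τ) := by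
          rw [hη m]; field_simp; ring
        have e2 : -(1 + τ) / ((m : ℝ) + 1 + τ) ≤ -3 / ((m : ℝ) + 3) := by
          rw [div_le_div_iff₀ hd (by linarith)]
          nlinarith
        have hlog : Real.log (((m : ℝ) + 4) / ((m : ℝ) + 3)) ≤ 1 / ((m : ℝ) + 3) := by
          have := Real.log_le_sub_one_of_pos
            (show (0 : ℝ) < ((m : ℝ) + 4) / ((m : ℝ) + 3) by positivity)
          have e : ((m : ℝ) + 4) / ((m : ℝ) + 3) - 1 = 1 / ((m : ℝ) + 3) := by
            field_simp; norm_num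
          linarith [this, e ▸ this]
        have e3 : Real.log (((m : ℝ) + 4) / ((m : ℝ) + 3))
            = Real.log ((m : ℝ) + 4) - Real.log ((m : ℝ) + 3) := by
          rw [Real.log_div (by positivity) (by positivity)]
        have hcast : ((m + 1 : ℕ) : ℝ) = (m : ℝ) + 1 := by push_cast; ring
        have a1 : (m : ℝ) + 1 + 2 = (m : ℝ) + 3 := by ring
        have a2 : (m : ℝ) + 1 + 3 = (m : ℝ) + 4 := by ring
        rw [hcast, a1, a2, e1]
        rw [e3] at hlog
        have h3 : -3 / ((m : ℝ) + 3) = -(3 * (1 / ((m : ℝ) + 3))) := by ring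
        nlinarith [e2, hlog]
      -- telescoping
      have htel : ∑ j ∈ Icc (n + 1) (n + (k + 1)),
          (3 * Real.log ((j : ℝ) + 2) - 3 * Real.log ((j : ℝ) + 3))
          = 3 * Real.log ((n : ℝ) + 3) - 3 * Real.log ((n : ℝ) + (k + 1) + 3) := by
        have hIcc : Icc (n + 1) (n + (k + 1)) = Ico (n + 1) (n + (k + 1) + 1) :=
          (Finset.Ico_add_one_right_eq_Icc _ _).symm
        rw [hIcc, Finset.sum_Ico_eq_sum_range]
        have hlen : n + (k + 1) + 1 - (n + 1) = k + 1 := by omega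
        rw [hlen]
        have e : ∀ i ∈ range (k + 1),
            3 * Real.log (((n + 1 + i : ℕ) : ℝ) + 2) - 3 * Real.log (((n + 1 + i : ℕ) : ℝ) + 3)
            = (fun i : ℕ => 3 * Real.log ((n : ℝ) + i + 3)) i
              - (fun i : ℕ => 3 * Real.log ((n : ℝ) + i + 3)) (i + 1) := by
          intro i _
          simp only []
          have c1 : ((n + 1 + i : ℕ) : ℝ) + 2 = (n : ℝ) + (i : ℝ) + 3 := by push_cast; ring
          have c2 : ((n + 1 + i : ℕ) : ℝ) + 3 = (n : ℝ) + ((i + 1 : ℕ) : ℝ) + 3 := by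
            push_cast; ring
          rw [c1, c2]
        rw [Finset.sum_congr rfl e, Finset.sum_range_sub'
          (fun i : ℕ => 3 * Real.log ((n : ℝ) + i + 3)) (k + 1)]
        have c3 : ((0 : ℕ) : ℝ) = 0 := by norm_num
        simp only [c3, add_zero, Nat.cast_zero]
        push_cast
        ring_nf
      have hζle : ζ (n + (k + 1)) n
          ≤ 3 * Real.log ((n : ℝ) + 3) - 3 * Real.log ((n : ℝ) + (k + 1) + 3) := by
        rw [h1, ← htel]
        exact Finset.sum_le_sum hpt
      have hexp : Real.exp (3 * Real.log ((n : ℝ) + 3) - 3 * Real.log ((n : ℝ) + (k + 1) + 3))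
          = ((n : ℝ) + 3) ^ 3 / ((n : ℝ) + (k + 1) + 3) ^ 3 := by
        rw [Real.exp_sub]
        have e1 : Real.exp (3 * Real.log ((n : ℝ) + 3)) = ((n : ℝ) + 3) ^ 3 := by
          rw [show (3 : ℝ) = ((3 : ℕ) : ℝ) by norm_num, Real.exp_nat_mul,
            Real.exp_log (by positivity)]
        have e2 : Real.exp (3 * Real.log ((n : ℝ) + (k + 1) + 3))
            = ((n : ℝ) + (k + 1) + 3) ^ 3 := by
          rw [show (3 : ℝ) = ((3 : ℕ) : ℝ) by norm_num, Real.exp_nat_mul,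
            Real.exp_log (by positivity)]
        rw [e1, e2]
      calc Real.exp (ζ (n + (k + 1)) n)
          ≤ Real.exp (3 * Real.log ((n : ℝ) + 3) - 3 * Real.log ((n : ℝ) + (k + 1) + 3)) :=
            Real.exp_le_exp.mpr hζle
        _ = ((n : ℝ) + 3) ^ 3 / ((n : ℝ) + (k + 1) + 3) ^ 3 := hexp
        _ = g (k + 1) := by rw [hgdef]; push_cast; ring_nf
  -- summability of g
  have hsg : Summable g := by
    have h1 : Summable (fun m : ℕ => 1 / (m : ℝ) ^ 3) :=
      Real.summable_one_div_nat_pow.mpr (by norm_num)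
    have h2 : Summable (fun k : ℕ => 1 / ((k + (n + 3) : ℕ) : ℝ) ^ 3) :=
      (summable_nat_add_iff (f := fun m : ℕ => 1 / (m : ℝ) ^ 3) (n + 3)).mpr h1
    have h3 : Summable (fun k : ℕ => 1 / ((n : ℝ) + k + 3) ^ 3) :=
      h2.congr fun k => by push_cast; ring
    refine (h3.mul_left (((n : ℝ) + 3) ^ 3)).congr fun k => ?_
    simp only [hgdef]
    ring
  -- partial sums of g
  have hg_partial : ∀ N : ℕ, ∑ k ∈ range N, g k ≤ ((n : ℝ) + 5) / 2 := by
    intro N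
    match N with
    | 0 => simp; positivity
    | (M + 1) =>
      rw [Finset.sum_range_succ']
      have hg0 : g 0 = 1 := by
        rw [hgdef]; simp only [Nat.cast_zero, add_zero]; rw [div_self (by positivity)]
      set h : ℕ → ℝ := fun i => (((n : ℝ) + 3) ^ 3 / ((n : ℝ) + i + 3) ^ 2) / 2 with hhdef
      have hstep : ∀ i ∈ range M, g (i + 1) ≤ h i - h (i + 1) := by
        intro i _
        have ha : (0 : ℝ) < (n : ℝ) + i + 3 := by positivity
        have hb : (0 : ℝ) < (n : ℝ) + i + 4 := by positivity
        have hcast : ((i + 1 : ℕ) : ℝ) = (i : ℝ) + 1 := by push_cast; ring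
        rw [hgdef, hhdef]
        simp only [hcast]
        have key : (1 : ℝ) / ((n : ℝ) + i + 4) ^ 3
            ≤ (1 / ((n : ℝ) + i + 3) ^ 2 - 1 / ((n : ℝ) + i + 4) ^ 2) / 2 := by
          rw [div_sub_div _ _ (by positivity) (by positivity), div_div,
            div_le_div_iff₀ (by positivity) (by positivity)]
          nlinarith [sq_nonneg ((n : ℝ) + i), ha, hb]
        have hc3 : (0 : ℝ) ≤ ((n : ℝ) + 3) ^ 3 := by positivity
        have := mul_le_mul_of_nonneg_left key hc3
        calc ((n : ℝ) + 3) ^ 3 / ((n : ℝ) + ((i : ℝ) + 1) + 3) ^ 3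
            = ((n : ℝ) + 3) ^ 3 * (1 / ((n : ℝ) + i + 4) ^ 3) := by ring
          _ ≤ ((n : ℝ) + 3) ^ 3 * ((1 / ((n : ℝ) + i + 3) ^ 2 - 1 / ((n : ℝ) + i + 4) ^ 2) / 2) :=
              this
          _ = ((n : ℝ) + 3) ^ 3 / ((n : ℝ) + i + 3) ^ 2 / 2
              - ((n : ℝ) + 3) ^ 3 / ((n : ℝ) + ((i : ℝ) + 1) + 3) ^ 2 / 2 := by ring
      have hsumstep : ∑ i ∈ range M, g (i + 1) ≤ ∑ i ∈ range M, (h i - h (i + 1)) :=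
        Finset.sum_le_sum hstep
      rw [Finset.sum_range_sub' h M] at hsumstep
      have hh0 : h 0 = ((n : ℝ) + 3) / 2 := by
        rw [hhdef]
        simp only [Nat.cast_zero, add_zero]
        rw [pow_succ]
        field_simp
      have hhM : 0 ≤ h M := by rw [hhdef]; positivity
      have : ∑ i ∈ range M, g (i + 1) ≤ ((n : ℝ) + 3) / 2 := by
        rw [hh0] at hsumstep; linarith
      rw [hg0]
      linarith
  -- summability of f
  have hnn : ∀ k : ℕ, 0 ≤ Real.exp (ζ (n + k) n) := fun k => (Real.exp_pos _).le
  have hsf : Summable (fun k : ℕ => Real.exp (ζ (n + k) n)) :=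
    Summable.of_nonneg_of_le hnn hA hsg
  refine ⟨hsf, ?_⟩
  apply Summable.tsum_le_of_sum_range_le hsf
  intro N
  calc ∑ k ∈ range N, Real.exp (ζ (n + k) n) ≤ ∑ k ∈ range N, g k :=
        Finset.sum_le_sum fun i _ => hA i
    _ ≤ ((n : ℝ) + 5) / 2 := hg_partial N
    _ ≤ ((n : ℝ) + 7) / 2 := by linarith
end

section
/- Let $(\mu_{n,j})$ be a real array with $\mu_{0,0}=1$ and for $n\ge1$: $1\le\mu_{n,n}<2$, $\mu_{n,n-1}=1-\mu_{n,n}$, $\mu_{n,j}=0$ for $j<n-1$. For each $n$, set $\zeta_{k,n}=0$ if $k\le n$ and $\zeta_{k,n}=\sum_{j=n+1}^k(\mu_{j,j}-2)$ if $k>n$, and suppose $\chi_n=\sum_{k\ge n}\exp(\zeta_{k,n})<+\infty$. Let $(\xi_n)$ be a sequence in $[0,+\infty[$ and $(\varepsilon_n)$ a sequence in $[0,+\infty[$ with $\sum_{n}\chi_n\varepsilon_n<+\infty$ and $\xi_{n+1}\le\sum_{j=0}^n\mu_{n,j}\xi_j+\varepsilon_n$ for all $n$. Then $(\xi_n)$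 converges. -/
/-!
With `c n = μ (n + 1) (n + 1) - 1 ∈ [0, 1)`, the recursion reads
`ξ (n + 2) - ξ (n + 1) ≤ c n * (ξ (n + 1) - ξ n) + ε (n + 1)`, so the positive increments
`d n = (ξ (n + 1) - ξ n)⁺` satisfy a linear recursive inequality. Unrolling it (discrete Grönwall)
and bounding `∏ c i ≤ exp (∑ (c i - 1)) = exp ζ` gives `d k ≤ ∑_{n ≤ k} ε n * exp (ζ k n)`;
exchanging the order of summation bounds `∑ d` by `∑ χ n * ε n`. Finally, a sequence that is
bounded below and has summable positive increments converges, because `ξ n - ∑_{i < n} d i` is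
antitone and bounded below.
-/

open Finset Filter Topology

theorem exists_tendsto_of_bddBelow_of_summable_posPart_sub {x : ℕ → ℝ}
    (hx : BddBelow (Set.range x)) (hs : Summable fun n => (x (n + 1) - x n)⁺) :
    ∃ l, Tendsto x atTop (𝓝 l) := by
  set S : ℕ → ℝ := fun n => ∑ i ∈ range n, (x (i + 1) - x i)⁺
  have hanti : Antitone (x - S) := antitone_nat_of_succ_le fun n => by
    simp only [Pi.sub_apply, S, sum_range_succ]
    linarith [le_posPart (x (n + 1) - x n)]
  obtain ⟨b, hb⟩ := hx
  have hbdd : BddBelow (Set.range (x - S)) := ⟨b - ∑' i, (x (i + 1) - x i)⁺, by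
    rintro _ ⟨n, rfl⟩
    have := hs.sum_le_tsum (range n) fun i _ => posPart_nonneg _
    simp only [Pi.sub_apply]
    linarith [hb ⟨n, rfl⟩]⟩
  refine ⟨_, ((tendsto_atTop_ciInf hanti hbdd).add hs.hasSum.tendsto_sum_nat).congr fun n => ?_⟩
  simp [S]

theorem le_sum_range_mul_prod_of_le_mul_add {d c e : ℕ → ℝ} (hc : ∀ n, 0 ≤ c n)
    (h0 : d 0 ≤ e 0) (hstep : ∀ n, d (n + 1) ≤ c n * d n + e (n + 1)) (k : ℕ) :
    d k ≤ ∑ n ∈ range (k + 1), e n * ∏ i ∈ Ico n k, c i := by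
  have hgronwall := discrete_gronwall_prod_general (n₀ := 0) (b := fun n => e (n + 1))
    (fun n _ => hstep n) (fun n _ => hc n) k.zero_le
  rw [Nat.Ico_zero_eq_range] at hgronwall
  calc d k ≤ d 0 * ∏ i ∈ range k, c i + ∑ n ∈ range k, e (n + 1) * ∏ i ∈ Ico (n + 1) k, c i :=
        hgronwall
    _ ≤ e 0 * ∏ i ∈ range k, c i + ∑ n ∈ range k, e (n + 1) * ∏ i ∈ Ico (n + 1) k, c i := by
        gcongr
        exact prod_nonneg fun i _ => hc i
    _ = ∑ n ∈ range (k + 1), e n * ∏ i ∈ Ico n k, c i := by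
        rw [sum_range_succ', add_comm, Nat.Ico_zero_eq_range]

theorem summable_of_le_sum_range_mul {d e : ℕ → ℝ} {K : ℕ → ℕ → ℝ} (hd : ∀ k, 0 ≤ d k)
    (hK : ∀ k n, 0 ≤ K k n) (he : ∀ n, 0 ≤ e n) (hKs : ∀ n, Summable fun k => K (n + k) n)
    (hKe : Summable fun n => e n * ∑' k, K (n + k) n)
    (hle : ∀ k, d k ≤ ∑ n ∈ range (k + 1), e n * K k n) : Summable d := by
  refine summable_of_sum_range_le (c := ∑' n, e n * ∑' k, K (n + k) n) hd fun N => ?_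
  calc ∑ k ∈ range N, d k
      ≤ ∑ k ∈ range N, ∑ n ∈ range (k + 1), e n * K k n := sum_le_sum fun k _ => hle k
    _ = ∑ n ∈ range N, ∑ k ∈ Ico n N, e n * K k n :=
        sum_comm' fun k n => by simp only [mem_range, mem_Ico]; omega
    _ = ∑ n ∈ range N, e n * ∑ k ∈ range (N - n), K (n + k) n := by
        simp_rw [sum_Ico_eq_sum_range, mul_sum]
    _ ≤ ∑ n ∈ range N, e n * ∑' k, K (n + k) n := by
        gcongr with n
        · exact he n
        · exact (hKs n).sum_le_tsum _ fun k _ => hK _ _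
    _ ≤ ∑' n, e n * ∑' k, K (n + k) n :=
        hKe.sum_le_tsum _ fun n _ => mul_nonneg (he n) (tsum_nonneg fun k => hK _ _)

theorem Real.prod_le_exp_sum_sub_one {ι : Type*} (s : Finset ι) {f : ι → ℝ}
    (hf : ∀ i ∈ s, 0 ≤ f i) : ∏ i ∈ s, f i ≤ Real.exp (∑ i ∈ s, (f i - 1)) := by
  rw [Real.exp_sum]
  exact prod_le_prod hf fun i _ => by linarith [Real.add_one_le_exp (f i - 1)]

theorem posPart_sub_le_mul_posPart_sub_add {x y z a e : ℝ} (ha : 0 ≤ a) (he : 0 ≤ e)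
    (h : z - y ≤ a * (y - x) + e) : (z - y)⁺ ≤ a * (y - x)⁺ + e :=
  sup_le (h.trans (by gcongr; exact le_posPart _)) (by positivity)

theorem sum_range_add_two_eq_of_inertial {μ : ℕ → ℕ → ℝ}
    (hsub : ∀ n : ℕ, 1 ≤ n → μ n (n - 1) = 1 - μ n n)
    (hzero : ∀ n j : ℕ, 1 ≤ n → j < n - 1 → μ n j = 0) (ξ : ℕ → ℝ) (n : ℕ) :
    ∑ j ∈ range (n + 2), μ (n + 1) j * ξ j =
      μ (n + 1) (n + 1) * ξ (n + 1) + (1 - μ (n + 1) (n + 1)) * ξ n := by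
  have hlow : ∑ j ∈ range n, μ (n + 1) j * ξ j = 0 :=
    sum_eq_zero fun j hj => by rw [hzero (n + 1) j n.succ_pos (by simpa using hj), zero_mul]
  rw [sum_range_succ, sum_range_succ, hlow, ← hsub (n + 1) n.succ_pos, Nat.add_sub_cancel]
  ring

theorem inertial_recursion_converges
    (μ : ℕ → ℕ → ℝ)
    (h00 : μ 0 0 = 1)
    (hdiag : ∀ n : ℕ, 1 ≤ n → 1 ≤ μ n n ∧ μ n n < 2)
    (hsub : ∀ n : ℕ, 1 ≤ n → μ n (n - 1) = 1 - μ n n)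
    (hzero : ∀ n j : ℕ, 1 ≤ n → j < n - 1 → μ n j = 0)
    (ζ : ℕ → ℕ → ℝ)
    (hζ : ∀ k n : ℕ, ζ k n = if k ≤ n then 0 else ∑ j ∈ Icc (n + 1) k, (μ j j - 2))
    (χ : ℕ → ℝ)
    (hχsum : ∀ n : ℕ, Summable (fun k : ℕ => Real.exp (ζ (n + k) n)))
    (hχ : ∀ n : ℕ, χ n = ∑' k : ℕ, Real.exp (ζ (n + k) n))
    (ξ ε : ℕ → ℝ)
    (hξ : ∀ n, 0 ≤ ξ n) (hε : ∀ n, 0 ≤ ε n)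
    (hχε : Summable (fun n => χ n * ε n))
    (hrec : ∀ n : ℕ, ξ (n + 1) ≤ (∑ j ∈ range (n + 1), μ n j * ξ j) + ε n) :
    ∃ l : ℝ, Tendsto ξ atTop (nhds l) := by
  set c : ℕ → ℝ := fun n => μ (n + 1) (n + 1) - 1
  have hc : ∀ n, 0 ≤ c n := fun n => by linarith [(hdiag (n + 1) n.succ_pos).1]
  have hrec0 : ξ 1 ≤ ξ 0 + ε 0 := by simpa [h00] using hrec 0
  have hd0 : (ξ 1 - ξ 0)⁺ ≤ ε 0 := sup_le (by linarith) (hε 0)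
  have hstep (n : ℕ) : (ξ (n + 2) - ξ (n + 1))⁺ ≤ c n * (ξ (n + 1) - ξ n)⁺ + ε (n + 1) := by
    refine posPart_sub_le_mul_posPart_sub_add (hc n) (hε _) ?_
    linarith [hrec (n + 1), sum_range_add_two_eq_of_inertial hsub hzero ξ n]
  have hkernel (k n : ℕ) (hn : n ≤ k) : ∏ i ∈ Ico n k, c i ≤ Real.exp (ζ k n) := by
    have hζ' : ζ k n = ∑ i ∈ Ico n k, (c i - 1) := by
      rw [hζ, ← Ico_add_one_right_eq_Icc, ← sum_Ico_add']
      split_ifs with hkn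
      · simp [show k = n by omega]
      · exact sum_congr rfl fun i _ => by ring
    exact hζ' ▸ Real.prod_le_exp_sum_sub_one _ fun i _ => hc i
  have hsummable : Summable fun n => (ξ (n + 1) - ξ n)⁺ := by
    refine summable_of_le_sum_range_mul (fun _ => posPart_nonneg _)
      (fun _ _ => (Real.exp_pos _).le) hε hχsum (by simpa [hχ, mul_comm] using hχε) fun k => ?_
    refine (le_sum_range_mul_prod_of_le_mul_add (d := fun n => (ξ (n + 1) - ξ n)⁺)
      hc hd0 hstep k).trans (sum_le_sum fun n hn => ?_)
    exact mul_le_mul_of_nonneg_left (hkernel k n (Nat.lt_succ_iff.1 (mem_range.1 hn))) (hε n)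
  have hbdd : BddBelow (Set.range ξ) := ⟨0, by rintro _ ⟨n, rfl⟩; exact hξ n⟩
  exact exists_tendsto_of_bddBelow_of_summable_posPart_sub hbdd hsummable
end

section
/- Let $\mathcal{H}$ be a real Hilbert space and for $i=1,\dots,m$ let $T_i:\mathcal{H}\to\mathcal{H}$ be nonexpansive and $\alpha_i$-averaged with $\alpha_i\in]0,1[$, i.e., $T_i=(1-\alpha_i)\mathrm{Id}+\alpha_iR_i$ with $R_i$ nonexpansive. Then the composition $T_1\cdots T_m$ is $\phi$-averaged, where $\phi=\big(1+(\sum_{i=1}^m\alpha_i/(1-\alpha_i))^{-1}\big)^{-1}$. -/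
/-!
With `γ = α / (1 - α)`, `T = (1 - α) Id + α R` is `α`-averaged iff
`γ ‖T x - T y‖² + ‖(x - y) - (T x - T y)‖² ≤ γ ‖x - y‖²`, because the gap between the two sides is
`α² / (1 - α) (‖x - y‖² - ‖R x - R y‖²)`. In this normalization the parameters simply add under
composition (a weighted Young inequality absorbs the cross term), so `T₁ ⋯ Tₘ` satisfies the
inequality with `γ = ∑ αᵢ / (1 - αᵢ)`, which corresponds to `φ = γ / (1 + γ) = (1 + γ⁻¹)⁻¹`.
-/

open Finset

/-- `T` is `α`-averaged: `T = (1-α)•Id + α•R` with `R` nonexpansive. -/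
def IsAveraged {H : Type*} [NormedAddCommGroup H] [InnerProductSpace ℝ H]
    (α : ℝ) (T : H → H) : Prop :=
  ∃ R : H → H, (∀ x y : H, ‖R x - R y‖ ≤ ‖x - y‖) ∧
    ∀ x : H, T x = (1 - α) • x + α • R x

section Averaged

variable {H : Type*} [NormedAddCommGroup H] [InnerProductSpace ℝ H]

def AveragedIneq (γ : ℝ) (T : H → H) : Prop :=
  ∀ x y : H, γ * ‖T x - T y‖ ^ 2 + ‖(x - y) - (T x - T y)‖ ^ 2 ≤ γ * ‖x - y‖ ^ 2

theorem norm_sub_smul_add_smul_sq (α : ℝ) (u r : H) :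
    ‖(1 - α) • u + α • r‖ ^ 2 =
      (1 - α) * ‖u‖ ^ 2 + α * ‖r‖ ^ 2 - α * (1 - α) * ‖u - r‖ ^ 2 := by
  simp only [← real_inner_self_eq_norm_sq, inner_add_left, inner_add_right, inner_sub_left,
    inner_sub_right, real_inner_smul_left, real_inner_smul_right, real_inner_comm u r]
  ring

theorem isAveraged_iff_nonexpansive {α : ℝ} (hα : α ≠ 0) {T : H → H} :
    IsAveraged α T ↔ ∀ x y : H,
      ‖((1 - α⁻¹) • x + α⁻¹ • T x) - ((1 - α⁻¹) • y + α⁻¹ • T y)‖ ≤ ‖x - y‖ := by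
  constructor
  · rintro ⟨R, hR, hT⟩ x y
    have hRT : ∀ z, (1 - α⁻¹) • z + α⁻¹ • T z = R z := fun z => by
      rw [hT]; match_scalars <;> grind
    simpa only [hRT] using hR x y
  · intro h
    refine ⟨_, h, fun x => ?_⟩
    match_scalars <;> grind

theorem isAveraged_iff_averagedIneq {α : ℝ} (hα : α ∈ Set.Ioo (0 : ℝ) 1) {T : H → H} :
    IsAveraged α T ↔ AveragedIneq (α / (1 - α)) T := by
  obtain ⟨hα₀, hα₁⟩ := hα
  rw [isAveraged_iff_nonexpansive hα₀.ne']
  refine forall₂_congr fun x y => ?_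
  set r := ((1 - α⁻¹) • x + α⁻¹ • T x) - ((1 - α⁻¹) • y + α⁻¹ • T y)
  have hT : T x - T y = (1 - α) • (x - y) + α • r := by
    simp only [r]; match_scalars <;> grind
  have hsub : (x - y) - (T x - T y) = α • ((x - y) - r) := by rw [hT]; module
  have key : α / (1 - α) * ‖x - y‖ ^ 2
      - (α / (1 - α) * ‖T x - T y‖ ^ 2 + ‖(x - y) - (T x - T y)‖ ^ 2)
      = α ^ 2 / (1 - α) * (‖x - y‖ ^ 2 - ‖r‖ ^ 2) := by
    rw [hsub, hT, norm_sub_smul_add_smul_sq, norm_smul, mul_pow, Real.norm_eq_abs, sq_abs]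
    field_simp
    ring
  have hc : 0 < α ^ 2 / (1 - α) := div_pos (by positivity) (sub_pos.2 hα₁)
  rw [← sq_le_sq₀ (norm_nonneg r) (norm_nonneg _), ← sub_nonneg,
    ← mul_nonneg_iff_of_pos_left hc, ← key, sub_nonneg]

theorem AveragedIneq.comp {γ₁ γ₂ : ℝ} (hγ₁ : 0 < γ₁) (hγ₂ : 0 < γ₂) {S T : H → H}
    (hS : AveragedIneq γ₁ S) (hT : AveragedIneq γ₂ T) : AveragedIneq (γ₁ + γ₂) (S ∘ T) := by
  intro x y
  have h₁ := hS (T x) (T y)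
  have h₂ := hT x y
  set u := x - y
  set v := T x - T y
  set w := S (T x) - S (T y)
  have hsplit : u - w = (u - v) + (v - w) := by abel
  -- Young's inequality `2⟪a, b⟫ ≤ (γ₁/γ₂)‖a‖² + (γ₂/γ₁)‖b‖²` for `a = u - v`, `b = v - w`,
  -- cleared of denominators.
  have hyoung : 2 * γ₁ * γ₂ * inner ℝ (u - v) (v - w)
      ≤ γ₁ ^ 2 * ‖u - v‖ ^ 2 + γ₂ ^ 2 * ‖v - w‖ ^ 2 := by
    nlinarith [real_inner_le_norm (u - v) (v - w),
      two_mul_le_add_sq (γ₁ * ‖u - v‖) (γ₂ * ‖v - w‖), mul_pos hγ₁ hγ₂]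
  simp only [Function.comp_apply]
  rw [hsplit, norm_add_sq_real]
  nlinarith [mul_pos hγ₁ hγ₂]

theorem averagedIneq_foldr_comp {m : ℕ} (hm : 1 ≤ m) (T : Fin m → H → H) (γ : Fin m → ℝ)
    (hγ : ∀ i, 0 < γ i) (hT : ∀ i, AveragedIneq (γ i) (T i)) :
    AveragedIneq (∑ i, γ i) ((List.ofFn T).foldr (· ∘ ·) id) := by
  induction m, hm using Nat.le_induction with
  | base => simpa using hT 0
  | succ n hn ih =>
    have htail : 0 < ∑ i : Fin n, γ i.succ :=
      sum_pos (fun i _ => hγ i.succ) (univ_nonempty_iff.2 ⟨⟨0, hn⟩⟩)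
    rw [List.ofFn_succ, List.foldr_cons, Fin.sum_univ_succ]
    exact (hT 0).comp (hγ 0) htail (ih _ _ (fun i => hγ i.succ) fun i => hT i.succ)

end Averaged

theorem composition_averaged
    {H : Type*} [NormedAddCommGroup H] [InnerProductSpace ℝ H]
    (m : ℕ) (hm : 1 ≤ m)
    (T : Fin m → H → H) (α : Fin m → ℝ)
    (hα : ∀ i, α i ∈ Set.Ioo (0 : ℝ) 1)
    (hT : ∀ i, IsAveraged (α i) (T i)) :
    IsAveraged ((1 + (∑ i, α i / (1 - α i))⁻¹)⁻¹)
      ((List.ofFn T).foldr (· ∘ ·) id) := by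
  have hγ : ∀ i, 0 < α i / (1 - α i) := fun i => div_pos (hα i).1 (sub_pos.2 (hα i).2)
  have hcomp := averagedIneq_foldr_comp hm T _ hγ fun i =>
    (isAveraged_iff_averagedIneq (hα i)).1 (hT i)
  set s := ∑ i, α i / (1 - α i)
  have hs : 0 < s := sum_pos (fun i _ => hγ i) (univ_nonempty_iff.2 ⟨⟨0, hm⟩⟩)
  have hφ : (1 + s⁻¹)⁻¹ ∈ Set.Ioo (0 : ℝ) 1 :=
    ⟨by positivity, inv_lt_one_of_one_lt₀ (by simpa using hs)⟩
  rw [isAveraged_iff_averagedIneq hφ]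
  convert hcomp using 1
  field_simp
  ring
end

section
/- Let $(\beta_n)_{n\ge-1}$, $(\delta_n)$, $(\gamma_n)$ be sequences in $[0,+\infty[$ with $\beta_{-1}=\beta_0$, let $(\eta_n)$ be nondecreasing in $[0,\eta]$ for some $\eta\in]0,1[$, let $(\lambda_n)$ be in $]0,+\infty[$, $(\phi_n)$ in $]0,1]$, and $(\vartheta,\sigma)\in]0,+\infty[^2$. Set $\omega_n=1/\phi_n-\lambda_n$ and suppose for all $n$: (i) $\gamma_n\le\eta(1+\eta)+\eta\vartheta\omega_n$; (ii) $(\eta^2(1+\eta)+\eta\sigma)/\vartheta<1/\phi_n-\eta^2\omega_{n+1}$; (iii) $\lambda_n\le\big(\vartheta/\phi_n-\eta(\eta(1+\eta)+\eta\vartheta\omega_{n+1}+\sigma)\big)/\big(\vartheta(1+\eta(1+\eta)+\eta\vartheta\omega_{n+1}+\sigma)\big)$; (iv) $\beta_{n+1}-\beta_n-\eta_n(\beta_n-\beta_{n-1})\le\frac{(1/\phi_n-\lambda_n)(\eta_n/(\eta_n+\vartheta\lambda_n)-1)}{\lambda_n}\delta_{n+1}+\gamma_n\delta_n$. Then $\sum_{n\in\mathbb{N}}\delta_n<+\infty$.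 -/
theorem summability_lemma
    (β δ γ : ℕ → ℝ) (η : ℕ → ℝ) (lam φ : ℕ → ℝ)
    (ηbar ϑ σ : ℝ)
    (hβ : ∀ n, 0 ≤ β n) (hδ : ∀ n, 0 ≤ δ n) (hγ : ∀ n, 0 ≤ γ n)
    (hηmono : ∀ n, η n ≤ η (n + 1))
    (hη0 : ∀ n, 0 ≤ η n) (hηle : ∀ n, η n ≤ ηbar)
    (hηbar : ηbar ∈ Set.Ioo (0 : ℝ) 1)
    (hlam : ∀ n, 0 < lam n)
    (hφ : ∀ n, φ n ∈ Set.Ioc (0 : ℝ) 1)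
    (hϑ : 0 < ϑ) (hσ : 0 < σ)
    (ω : ℕ → ℝ) (hω : ∀ n, ω n = 1 / φ n - lam n)
    (h1 : ∀ n, γ n ≤ ηbar * (1 + ηbar) + ηbar * ϑ * ω n)
    (h2 : ∀ n, (ηbar ^ 2 * (1 + ηbar) + ηbar * σ) / ϑ
            < 1 / φ n - ηbar ^ 2 * ω (n + 1))
    (h3 : ∀ n, lam n ≤
          (ϑ / φ n - ηbar * (ηbar * (1 + ηbar) + ηbar * ϑ * ω (n + 1) + σ))
          / (ϑ * (1 + ηbar * (1 + ηbar) + ηbar * ϑ * ω (n + 1) + σ)))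
    (h4 : ∀ n : ℕ, β (n + 1) - β n - η n * (β n - β (n - 1)) ≤
          ((1 / φ n - lam n) * (η n / (η n + ϑ * lam n) - 1)) / lam n * δ (n + 1)
          + γ n * δ n) :
    Summable δ := by
  obtain ⟨hηbar0, hηbar1⟩ := hηbar
  -- B n ≥ σ > 0
  have hBpos : ∀ n, 0 < ηbar * (1 + ηbar) + ηbar * ϑ * ω (n + 1) + σ := by
    intro n
    have := (hγ (n + 1)).trans (h1 (n + 1))
    linarith
  -- key: (ηbar + ϑ λ_n) B_n ≤ ϑ ω_n
  have hkey : ∀ n,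
      (ηbar + ϑ * lam n) * (ηbar * (1 + ηbar) + ηbar * ϑ * ω (n + 1) + σ) ≤ ϑ * ω n := by
    intro n
    have hden : (0 : ℝ) < ϑ * (1 + ηbar * (1 + ηbar) + ηbar * ϑ * ω (n + 1) + σ) := by
      have := hBpos n
      have : (0:ℝ) < 1 + ηbar * (1 + ηbar) + ηbar * ϑ * ω (n + 1) + σ := by linarith
      exact mul_pos hϑ this
    have h3n := (le_div_iff₀ hden).mp (h3 n)
    have e : ϑ / φ n = ϑ * (1 / φ n) := by ring
    rw [e] at h3n
    rw [hω n]
    nlinarith [h3n]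
  have hωpos : ∀ n, 0 ≤ ω n := by
    intro n
    have h := hkey n
    have hp : 0 < ηbar + ϑ * lam n := by nlinarith [mul_pos hϑ (hlam n)]
    nlinarith [hBpos n, mul_pos hp (hBpos n)]
  -- per-step inequality with explicit coefficient
  have hstep : ∀ n, β (n + 1) - β n - η n * (β n - β (n - 1)) ≤
      -((γ (n + 1) + σ) * δ (n + 1)) + γ n * δ n := by
    intro n
    refine (h4 n).trans ?_
    have hd : 0 < η n + ϑ * lam n :=
      add_pos_of_nonneg_of_pos (hη0 n) (mul_pos hϑ (hlam n))
    have hcoef : ((1 / φ n - lam n) * (η n / (η n + ϑ * lam n) - 1)) / lam n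
        = -(ϑ * ω n / (η n + ϑ * lam n)) := by
      have hd' : η n + ϑ * lam n ≠ 0 := ne_of_gt hd
      have hl : lam n ≠ 0 := (hlam n).ne'
      rw [← hω n]
      field_simp
      ring
    rw [hcoef]
    have h6 : γ (n + 1) + σ ≤ ϑ * ω n / (η n + ϑ * lam n) := by
      rw [le_div_iff₀ hd]
      have hB' : γ (n + 1) + σ ≤ ηbar * (1 + ηbar) + ηbar * ϑ * ω (n + 1) + σ := by
        linarith [h1 (n + 1)]
      have t1 : (γ (n + 1) + σ) * (η n + ϑ * lam n)
          ≤ (ηbar * (1 + ηbar) + ηbar * ϑ * ω (n + 1) + σ) * (η n + ϑ * lam n) :=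
        mul_le_mul_of_nonneg_right hB' hd.le
      have t2 : (ηbar * (1 + ηbar) + ηbar * ϑ * ω (n + 1) + σ) * (η n + ϑ * lam n)
          ≤ (ηbar * (1 + ηbar) + ηbar * ϑ * ω (n + 1) + σ) * (ηbar + ϑ * lam n) :=
        mul_le_mul_of_nonneg_left (by linarith [hηle n]) (hBpos n).le
      nlinarith [hkey n]
    have h7 := mul_le_mul_of_nonneg_right h6 (hδ (n + 1))
    linarith
  -- main induction
  have Hmain : ∀ N, β (N + 1) + σ * (∑ n ∈ Finset.range (N + 1), δ (n + 1))
      + γ (N + 1) * δ (N + 1) ≤ η N * β N + (β 0 + γ 0 * δ 0) := by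
    intro N
    induction N with
    | zero =>
      have h := hstep 0
      simp only [Nat.zero_sub, zero_add, Finset.sum_range_one] at h ⊢
      nlinarith [mul_nonneg (hη0 0) (hβ 0)]
    | succ N ih =>
      have hs := hstep (N + 1)
      simp only [Nat.add_sub_cancel] at hs
      rw [Finset.sum_range_succ]
      have hm := mul_le_mul_of_nonneg_right (hηmono N) (hβ N)
      linarith [hs, ih, hm]
  have hC : 0 ≤ β 0 + γ 0 * δ 0 := add_nonneg (hβ 0) (mul_nonneg (hγ 0) (hδ 0))
  have hX : 0 ≤ (β 0 + γ 0 * δ 0) / (1 - ηbar) := div_nonneg hC (by linarith)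
  have hfe : (β 0 + γ 0 * δ 0) / (1 - ηbar) * (1 - ηbar) = β 0 + γ 0 * δ 0 :=
    div_mul_cancel₀ _ (by linarith : (1:ℝ) - ηbar ≠ 0)
  -- β bounded
  have hβbd : ∀ N, β N ≤ β 0 + (β 0 + γ 0 * δ 0) / (1 - ηbar) := by
    intro N
    induction N with
    | zero => linarith
    | succ N ih =>
      have h := Hmain N
      have hσS : 0 ≤ σ * ∑ n ∈ Finset.range (N + 1), δ (n + 1) :=
        mul_nonneg hσ.le (Finset.sum_nonneg fun i _ => hδ _)
      have hγδ : 0 ≤ γ (N + 1) * δ (N + 1) := mul_nonneg (hγ _) (hδ _)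
      have hηN : η N * β N ≤ ηbar * β N := mul_le_mul_of_nonneg_right (hηle N) (hβ N)
      have h2' : ηbar * β N ≤ ηbar * (β 0 + (β 0 + γ 0 * δ 0) / (1 - ηbar)) :=
        mul_le_mul_of_nonneg_left ih hηbar0.le
      nlinarith [hβ 0]
  -- partial sums bounded
  have hsum : ∀ N, ∑ n ∈ Finset.range N, δ (n + 1)
      ≤ (ηbar * (β 0 + (β 0 + γ 0 * δ 0) / (1 - ηbar)) + (β 0 + γ 0 * δ 0)) / σ := by
    intro N
    rw [le_div_iff₀ hσ]
    match N with
    | 0 =>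
      simp only [Finset.range_zero, Finset.sum_empty, zero_mul]
      nlinarith [hβ 0]
    | (M + 1) =>
      have h := Hmain M
      have hγδ : 0 ≤ γ (M + 1) * δ (M + 1) := mul_nonneg (hγ _) (hδ _)
      have hηN : η M * β M ≤ ηbar * β M := mul_le_mul_of_nonneg_right (hηle M) (hβ M)
      have h2' : ηbar * β M ≤ ηbar * (β 0 + (β 0 + γ 0 * δ 0) / (1 - ηbar)) :=
        mul_le_mul_of_nonneg_left (hβbd M) hηbar0.le
      nlinarith [hβ (M + 1)]
  have hsummable : Summable (fun n => δ (n + 1)) :=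
    summable_of_sum_range_le (fun n => hδ _) hsum
  exact (summable_nat_add_iff 1).mp hsummable
end
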